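/- For binary Y and Z, consider the saturated logistic missingness model P_θ(R=1|z,y) = expit(θ₀ + θ₁z + θ₂y + θ₃zy) with θ ∈ ℝ⁴ and P_ξ(Y=1) parameterized by ξ. For every (θ, ξ) with P_ξ a nondegenerate distribution, there exists (θ̃, ξ̃) ≠ (θ, ξ) such that P_θ(R=1|z,y)/P_{θ̃}(R=1|z,y) = P_{ξ̃}(y)/P_ξ(y) for all z, y ∈ {0,1}. Hence the saturated model is not identified. -/

import Mathlib

noncomputable def expit (t : ℝ) : ℝ := 1 / (1 + Real.exp (-t))

/-- pmf of a Bernoulli(p) outcome. -/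
def bern (p : ℝ) (y : Bool) : ℝ := if y then p else 1 - p

/-- indicator of a binary value as a real number. -/
def ind (b : Bool) : ℝ := if b then 1 else 0

/-!
Every cell probability `P_θ(R=1|z,y)` is below `1`, so there is a level `M < 1` above all
four of them. Moving `p` slightly up to `p'` makes both likelihood ratios
`bern p' y / bern p y` exceed `M`. Each cell then only asks for a logistic value
`expit(θ-cell) / ratio ∈ (0, 1)`, which `expit` attains; and the saturated model, having one
free parameter per cell, realises any four log-odds.
-/

lemma expit_eq_sigmoid : expit = Real.sigmoid := by
  ext t
  rw [expit, Real.sigmoid_def, one_div]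

lemma expit_pos (t : ℝ) : 0 < expit t := by
  rw [expit_eq_sigmoid]
  exact Real.sigmoid_pos t

lemma expit_lt_one (t : ℝ) : expit t < 1 := by
  rw [expit_eq_sigmoid]
  exact Real.sigmoid_lt_one t

lemma range_expit : Set.range expit = Set.Ioo 0 1 := by
  rw [expit_eq_sigmoid, Real.range_sigmoid]

lemma exists_expit_div_eq {a c : ℝ} (h : expit a < c) : ∃ t, expit a / expit t = c := by
  have hc : 0 < c := (expit_pos a).trans h
  have hmem : expit a / c ∈ Set.range expit := by
    rw [range_expit]
    exact ⟨div_pos (expit_pos a) hc, (div_lt_one hc).2 h⟩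
  obtain ⟨t, ht⟩ := hmem
  exact ⟨t, by rw [ht, div_div_cancel₀ (expit_pos a).ne']⟩

def saturatedPredictor (θ₀ θ₁ θ₂ θ₃ : ℝ) (z y : Bool) : ℝ :=
  θ₀ + θ₁ * ind z + θ₂ * ind y + θ₃ * ind z * ind y

lemma exists_saturatedPredictor_eq (f : Bool → Bool → ℝ) :
    ∃ t₀ t₁ t₂ t₃, ∀ z y, saturatedPredictor t₀ t₁ t₂ t₃ z y = f z y := by
  refine ⟨f false false, f true false - f false false, f false true - f false false,
    f true true - f true false - f false true + f false false, fun z y => ?_⟩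
  cases z <;> cases y <;> simp only [saturatedPredictor, ind] <;> norm_num
  ring

lemma exists_bern_div_bern_gt {p M : ℝ} (hp0 : 0 < p) (hp1 : p < 1) (hM0 : 0 ≤ M)
    (hM1 : M < 1) : ∃ p', 0 < p' ∧ p' < 1 ∧ p' ≠ p ∧ ∀ y, M < bern p' y / bern p y := by
  have hq : 0 < 1 - p := sub_pos.2 hp1
  obtain ⟨p', hpp', hp'M⟩ : ∃ p', p < p' ∧ p' < 1 - M * (1 - p) :=
    exists_between (by nlinarith)
  refine ⟨p', hp0.trans hpp', by nlinarith, hpp'.ne', fun y => ?_⟩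
  cases y
  · rw [bern, bern, if_neg Bool.false_ne_true, if_neg Bool.false_ne_true, lt_div_iff₀ hq]
    linarith
  · rw [bern, bern, if_pos rfl, if_pos rfl, lt_div_iff₀ hp0]
    nlinarith

/-- For binary `Y` and `Z`, the saturated logistic missingness
model `P_θ(R=1|z,y) = expit (θ₀ + θ₁ z + θ₂ y + θ₃ z y)` together with a
nondegenerate Bernoulli outcome law `P_ξ(Y=1) = p` is not identified: for any
`(θ, p)` there exists a different candidate `(θ̃, p̃)` (with `p̃` nondegenerate)
satisfying `P_θ(R=1|z,y) / P_θ̃(R=1|z,y) = P_ξ̃(y) / P_ξ(y)` for all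
`z, y ∈ {0,1}`. -/
theorem stmt3 (θ₀ θ₁ θ₂ θ₃ p : ℝ) (hp0 : 0 < p) (hp1 : p < 1) :
    ∃ t₀ t₁ t₂ t₃ p' : ℝ, 0 < p' ∧ p' < 1 ∧
      (t₀, t₁, t₂, t₃, p') ≠ (θ₀, θ₁, θ₂, θ₃, p) ∧
      ∀ z y : Bool,
        expit (θ₀ + θ₁ * ind z + θ₂ * ind y + θ₃ * ind z * ind y) /
          expit (t₀ + t₁ * ind z + t₂ * ind y + t₃ * ind z * ind y) =
          bern p' y / bern p y := by
  set cell : Bool × Bool → ℝ := fun zy => expit (saturatedPredictor θ₀ θ₁ θ₂ θ₃ zy.1 zy.2)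
  obtain ⟨zyMax, hcell_le⟩ := Finite.exists_max cell
  obtain ⟨p', hp'0, hp'1, hp'p, hratio⟩ :=
    exists_bern_div_bern_gt (M := cell zyMax) hp0 hp1 (expit_pos _).le (expit_lt_one _)
  have hcell_lt (z y : Bool) : cell (z, y) < bern p' y / bern p y :=
    (hcell_le (z, y)).trans_lt (hratio y)
  choose f hf using fun z y => exists_expit_div_eq (hcell_lt z y)
  obtain ⟨t₀, t₁, t₂, t₃, ht⟩ := exists_saturatedPredictor_eq f
  refine ⟨t₀, t₁, t₂, t₃, p', hp'0, hp'1, fun h => hp'p (congrArg (·.2.2.2.2) h), fun z y => ?_⟩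
  change expit (saturatedPredictor θ₀ θ₁ θ₂ θ₃ z y) /
    expit (saturatedPredictor t₀ t₁ t₂ t₃ z y) = _
  rw [ht]
  exact hf z y
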